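/- Assume the static Schrödinger bridge problem min_{π ∈ Π(μ₀,μ₁)} H(π | ρ), with ρ = ℙ₀∘(X₀,X₁)^{-1}, has a unique solution π* lying in Π₂(μ₀,μ₁). Then the measure P̂ defined by dP̂/dℙ₀ = (dπ*/dρ)(X₀,X₁) is the unique minimizer of H(·|ℙ₀) over P₂(μ₀,μ₁). -/

import Mathlib

open MeasureTheory
open scoped ENNReal

/-- Relative entropy `H(μ|ν) := ∫ ln(dμ/dν) dμ` if `μ ≪ ν` (with the integral
well defined), and `+∞` otherwise. -/
noncomputable def relEnt {Ω : Type*} [MeasurableSpace Ω] (μ ν : Measure Ω) : ℝ≥0∞ :=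
  open Classical in
  if μ ≪ ν ∧ Integrable (llr μ ν) μ then ENNReal.ofReal (∫ ω, llr μ ν ω ∂μ) else ⊤

/-!
Write `T = (X₀, X₁)`, so that `ρ = ℙ₀ ∘ T⁻¹`. Pushing a path measure forward along `T` maps
`P₂(μ₀,μ₁)` into the couplings and does not increase relative entropy (data processing).
Conversely, reweighting `ℙ₀` by `(dπ/dρ) ∘ T` gives a path measure with image `π` and the same
entropy as `π`; `P̂` is this reweighting of `π*`, so it is optimal. For uniqueness, the chain rule
`H(P|ℙ₀) = H(P|P') + H(P ∘ T⁻¹|ρ)`, where `P'` is the reweighting of `ℙ₀` by the image of `P`,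
shows that equality in the data-processing inequality forces `P = P'` whenever `H(P|ℙ₀) < ∞`
(true for `P ∈ P₂`, as `x log x + 1 - x ≤ (x - 1)²`). If `H(P|ℙ₀) = H(P̂|ℙ₀)`, the uniqueness
of `π*` gives `P ∘ T⁻¹ = π*`, hence `P = P̂`.
-/

open InformationTheory Set

section Entropy

variable {α : Type*} {mα : MeasurableSpace α} {μ ν : Measure α}

lemma relEnt_eq_klDiv [IsProbabilityMeasure μ] [IsProbabilityMeasure ν] :
    relEnt μ ν = klDiv μ ν := by
  rw [relEnt, klDiv_def]
  simp

lemma klFun_le_sq_sub_one {x : ℝ} (hx : 0 ≤ x) : klFun x ≤ (x - 1) ^ 2 := by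
  have : x * Real.log x ≤ x * (x - 1) := by
    rcases hx.eq_or_lt with rfl | hx
    · simp
    exact mul_le_mul_of_nonneg_left (Real.log_le_sub_one_of_pos hx) hx.le
  rw [klFun_apply]
  nlinarith

lemma klDiv_ne_top_of_integrable_rnDeriv_sq [IsFiniteMeasure μ] [IsFiniteMeasure ν]
    (hμν : μ ≪ ν) (h : Integrable (fun x => (μ.rnDeriv ν x).toReal ^ 2) ν) : klDiv μ ν ≠ ∞ := by
  refine klDiv_ne_top hμν ((integrable_klFun_rnDeriv_iff hμν).mp ?_)
  refine (h.add (integrable_const 1)).mono' (Measurable.aestronglyMeasurable (by fun_prop))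
    (ae_of_all _ fun x => ?_)
  have hx : 0 ≤ (μ.rnDeriv ν x).toReal := ENNReal.toReal_nonneg
  rw [Real.norm_of_nonneg (klFun_nonneg hx), Pi.add_apply]
  nlinarith [klFun_le_sq_sub_one hx]

lemma absolutelyContinuous_withDensity_of_ae_ne_zero {f : α → ℝ≥0∞} (hf : Measurable f)
    (hμν : μ ≪ ν) (hf₀ : ∀ᵐ x ∂μ, f x ≠ 0) : μ ≪ ν.withDensity f := by
  rw [← Measure.ae_le_iff_absolutelyContinuous]
  intro s hs
  filter_upwards [hμν.ae_le ((ae_withDensity_iff hf).mp hs), hf₀] with x hx hx₀ using hx hx₀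

end Entropy

section Reweighting

variable {α β : Type*} {mα : MeasurableSpace α} {mβ : MeasurableSpace β}
  {ν : Measure α} {T : α → β} {μ : Measure β}

/-- When `μ ≪ ν ∘ T⁻¹`, this is the measure with image `μ` under `T` whose conditional laws
given `T` are those of `ν`. -/
noncomputable def reweightAlong (ν : Measure α) (T : α → β) (μ : Measure β) : Measure α :=
  ν.withDensity fun a => μ.rnDeriv (ν.map T) (T a)

lemma map_withDensity_comp (hT : Measurable T) {f : β → ℝ≥0∞} (hf : Measurable f) :
    (ν.withDensity fun a => f (T a)).map T = (ν.map T).withDensity f := by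
  ext s hs
  rw [Measure.map_apply hT hs, withDensity_apply _ (hT hs), withDensity_apply _ hs,
    Measure.restrict_map hT hs, lintegral_map hf hT]

lemma reweightAlong_eq_withDensity_ofReal [SigmaFinite μ] (hT : Measurable T) :
    reweightAlong ν T μ
      = ν.withDensity fun a => ENNReal.ofReal (μ.rnDeriv (ν.map T) (T a)).toReal := by
  refine withDensity_congr_ae ?_
  filter_upwards [ae_of_ae_map hT.aemeasurable (Measure.rnDeriv_lt_top μ (ν.map T))] with a h
  exact (ENNReal.ofReal_toReal h.ne).symm

variable [IsFiniteMeasure ν]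

lemma rnDeriv_reweightAlong (hT : Measurable T) :
    (reweightAlong ν T μ).rnDeriv ν =ᵐ[ν] fun a => μ.rnDeriv (ν.map T) (T a) :=
  Measure.rnDeriv_withDensity ν ((Measure.measurable_rnDeriv _ _).comp hT)

lemma integrable_comp_toReal_rnDeriv_reweightAlong {f : ℝ → ℝ} (hT : Measurable T)
    (h : Integrable (fun a => f (μ.rnDeriv (ν.map T) (T a)).toReal) ν) :
    Integrable (fun a => f ((reweightAlong ν T μ).rnDeriv ν a).toReal) ν :=
  h.congr ((rnDeriv_reweightAlong hT).mono fun _ ha => congrArg (fun x => f x.toReal) ha.symm)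

variable [IsFiniteMeasure μ]

lemma map_reweightAlong (hT : Measurable T) (hμ : μ ≪ ν.map T) :
    (reweightAlong ν T μ).map T = μ := by
  rw [reweightAlong, map_withDensity_comp hT (Measure.measurable_rnDeriv _ _),
    Measure.withDensity_rnDeriv_eq _ _ hμ]

lemma reweightAlong_apply_univ (hT : Measurable T) (hμ : μ ≪ ν.map T) :
    reweightAlong ν T μ univ = μ univ := by
  rw [← map_reweightAlong hT hμ, Measure.map_apply hT .univ, preimage_univ, map_reweightAlong hT hμ]

lemma isFiniteMeasure_reweightAlong (hT : Measurable T) (hμ : μ ≪ ν.map T) :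
    IsFiniteMeasure (reweightAlong ν T μ) :=
  ⟨reweightAlong_apply_univ hT hμ ▸ measure_lt_top μ univ⟩

lemma isProbabilityMeasure_reweightAlong [IsProbabilityMeasure μ] (hT : Measurable T)
    (hμ : μ ≪ ν.map T) : IsProbabilityMeasure (reweightAlong ν T μ) :=
  ⟨reweightAlong_apply_univ hT hμ ▸ measure_univ⟩

lemma map_comp_reweightAlong {γ : Type*} {mγ : MeasurableSpace γ} {g : β → γ}
    (hT : Measurable T) (hμ : μ ≪ ν.map T) (hg : Measurable g) :
    (reweightAlong ν T μ).map (g ∘ T) = μ.map g := by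
  rw [← Measure.map_map hg hT, map_reweightAlong hT hμ]

lemma absolutelyContinuous_reweightAlong (hT : Measurable T) (h : ν.map T ≪ μ) :
    ν ≪ reweightAlong ν T μ :=
  withDensity_absolutelyContinuous' ((Measure.measurable_rnDeriv _ _).comp hT).aemeasurable
    (ae_of_ae_map hT.aemeasurable ((Measure.rnDeriv_pos' h).mono fun _ h => h.ne'))

lemma klDiv_reweightAlong (hT : Measurable T) (hμ : μ ≪ ν.map T) :
    klDiv (reweightAlong ν T μ) ν = klDiv μ (ν.map T) := by
  have := isFiniteMeasure_reweightAlong hT hμ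
  rw [klDiv_eq_lintegral_klFun_of_ac (μ := reweightAlong ν T μ)
      (withDensity_absolutelyContinuous ν _),
    klDiv_eq_lintegral_klFun_of_ac hμ, lintegral_map (by fun_prop) hT]
  refine lintegral_congr_ae ?_
  filter_upwards [rnDeriv_reweightAlong (μ := μ) hT] with a ha
  rw [ha]

variable {P : Measure α} [IsFiniteMeasure P]

lemma absolutelyContinuous_reweightAlong_map (hT : Measurable T) (hPν : P ≪ ν) :
    P ≪ reweightAlong ν T (P.map T) :=
  absolutelyContinuous_withDensity_of_ae_ne_zero ((Measure.measurable_rnDeriv _ _).comp hT) hPν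
    (ae_of_ae_map hT.aemeasurable ((Measure.rnDeriv_pos (hPν.map hT)).mono fun _ h => h.ne'))

lemma llr_ae_eq_llr_reweightAlong_add (hT : Measurable T) (hPν : P ≪ ν) :
    llr P ν =ᵐ[P]
      fun a => llr P (reweightAlong ν T (P.map T)) a + llr (P.map T) (ν.map T) (T a) := by
  have hPQ := absolutelyContinuous_reweightAlong_map hT hPν
  have := isFiniteMeasure_reweightAlong hT (hPν.map hT)
  have hk_pos : ∀ᵐ a ∂P, 0 < (P.map T).rnDeriv (ν.map T) (T a) :=
    ae_of_ae_map hT.aemeasurable (Measure.rnDeriv_pos (hPν.map hT))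
  have hk_fin : ∀ᵐ a ∂P, (P.map T).rnDeriv (ν.map T) (T a) < ∞ :=
    ae_of_ae_map hT.aemeasurable ((hPν.map hT).ae_le (Measure.rnDeriv_lt_top _ _))
  filter_upwards [hPν.ae_le (Measure.rnDeriv_mul_rnDeriv hPQ),
    hPν.ae_le (rnDeriv_reweightAlong (μ := P.map T) hT), Measure.rnDeriv_pos hPQ,
    hPQ.ae_le (Measure.rnDeriv_lt_top P _), hk_pos, hk_fin]
    with a hchain hQ hpos hfin hkpos hkfin
  rw [llr, llr, llr, ← hchain, Pi.mul_apply, hQ, ENNReal.toReal_mul,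
    Real.log_mul (ENNReal.toReal_pos hpos.ne' hfin.ne).ne'
      (ENNReal.toReal_pos hkpos.ne' hkfin.ne).ne']

lemma klDiv_eq_klDiv_reweightAlong_add_klDiv_map (hT : Measurable T) (hPν : P ≪ ν)
    (hint : Integrable (llr P ν) P) :
    klDiv P ν = klDiv P (reweightAlong ν T (P.map T)) + klDiv (P.map T) (ν.map T) := by
  set Q := reweightAlong ν T (P.map T)
  have hPQ : P ≪ Q := absolutelyContinuous_reweightAlong_map hT hPν
  have := isFiniteMeasure_reweightAlong hT (hPν.map hT)
  have hdecomp := llr_ae_eq_llr_reweightAlong_add hT hPν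
  have hmap_int : Integrable (llr (P.map T) (ν.map T)) (P.map T) := integrable_llr_map hPν hT hint
  have hmap_int' : Integrable (fun a => llr (P.map T) (ν.map T) (T a)) P :=
    (integrable_map_measure (stronglyMeasurable_llr _ _).aestronglyMeasurable
      hT.aemeasurable).mp hmap_int
  have hQ_int : Integrable (llr P Q) P :=
    (hint.sub hmap_int').congr (hdecomp.mono fun a h => by simp [h, Q])
  have hintegral : ∫ a, llr P ν a ∂P
      = ∫ a, llr P Q a ∂P + ∫ b, llr (P.map T) (ν.map T) b ∂(P.map T) := by
    rw [integral_congr_ae hdecomp, integral_add hQ_int hmap_int',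
      integral_map hT.aemeasurable (stronglyMeasurable_llr _ _).aestronglyMeasurable]
  rw [klDiv_of_ac_of_integrable hPν hint, klDiv_of_ac_of_integrable hPQ hQ_int,
    klDiv_of_ac_of_integrable (hPν.map hT) hmap_int,
    ← ENNReal.ofReal_add (integral_llr_add_sub_measure_univ_nonneg hPQ hQ_int)
      (integral_llr_add_sub_measure_univ_nonneg (hPν.map hT) hmap_int)]
  simp only [measureReal_def, Q, reweightAlong_apply_univ hT (hPν.map hT),
    Measure.map_apply hT .univ, preimage_univ, hintegral]
  congr 1
  ring

lemma eq_reweightAlong_of_klDiv_map_eq (hT : Measurable T) (hfin : klDiv P ν ≠ ∞)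
    (h : klDiv (P.map T) (ν.map T) = klDiv P ν) : P = reweightAlong ν T (P.map T) := by
  obtain ⟨hPν, hint⟩ := klDiv_ne_top_iff.mp hfin
  have := isFiniteMeasure_reweightAlong hT (hPν.map hT)
  have hsum := klDiv_eq_klDiv_reweightAlong_add_klDiv_map hT hPν hint
  rw [← h] at hsum hfin
  exact klDiv_eq_zero_iff.mp ((ENNReal.add_left_inj hfin).mp (hsum.symm.trans (zero_add _).symm))

lemma klDiv_reweightAlong_le (hT : Measurable T) (hμ : μ ≪ ν.map T)
    (hmin : klDiv μ (ν.map T) ≤ klDiv (P.map T) (ν.map T)) :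
    klDiv (reweightAlong ν T μ) ν ≤ klDiv P ν := by
  rw [klDiv_reweightAlong hT hμ]
  exact hmin.trans (klDiv_map_le P ν hT)

lemma eq_reweightAlong_of_klDiv_eq (hT : Measurable T) (hμ : μ ≪ ν.map T)
    (hmin : klDiv μ (ν.map T) ≤ klDiv (P.map T) (ν.map T))
    (huniq : klDiv (P.map T) (ν.map T) = klDiv μ (ν.map T) → P.map T = μ)
    (hfin : klDiv P ν ≠ ∞) (h : klDiv P ν = klDiv (reweightAlong ν T μ) ν) :
    P = reweightAlong ν T μ := by
  rw [klDiv_reweightAlong hT hμ] at h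
  have hmap : klDiv (P.map T) (ν.map T) = klDiv P ν :=
    le_antisymm (klDiv_map_le P ν hT) (h ▸ hmin)
  rw [← huniq (hmap.trans h)]
  exact eq_reweightAlong_of_klDiv_map_eq hT hfin hmap

end Reweighting

theorem stmt_10_general {d : ℕ} {Ω : Type*} {m0 : MeasurableSpace Ω}
    (ℙ₀ : Measure Ω) [IsProbabilityMeasure ℙ₀]
    (μ₀ μ₁ : Measure (EuclideanSpace ℝ (Fin d)))
    (X0 X1 : Ω → EuclideanSpace ℝ (Fin d))
    (hX0 : Measurable X0) (hX1 : Measurable X1)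
    (ρ : Measure (EuclideanSpace ℝ (Fin d) × EuclideanSpace ℝ (Fin d)))
    (hρ : ρ = ℙ₀.map (fun ω => (X0 ω, X1 ω)))
    -- the set of couplings Π(μ₀,μ₁) and its subset Cpl₂(μ₀,μ₁)
    (Cpl Cpl₂ : Set (Measure (EuclideanSpace ℝ (Fin d) × EuclideanSpace ℝ (Fin d))))
    (hCpl : Cpl = {π | IsProbabilityMeasure π ∧ π.map Prod.fst = μ₀
      ∧ π.map Prod.snd = μ₁})
    (hCpl₂ : Cpl₂ = {π ∈ Cpl | (π ≪ ρ ∧ ρ ≪ π)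
      ∧ Integrable (fun ω => |Real.log ((π.rnDeriv ρ (X0 ω, X1 ω)).toReal)|
          + ((π.rnDeriv ρ (X0 ω, X1 ω)).toReal) ^ 2) ℙ₀})
    -- π* is the unique solution of the Schrödinger bridge problem and lies in Cpl₂
    (πstar : Measure (EuclideanSpace ℝ (Fin d) × EuclideanSpace ℝ (Fin d)))
    (hπstar : πstar ∈ Cpl ∧ (∀ π ∈ Cpl, relEnt πstar ρ ≤ relEnt π ρ)
      ∧ (∀ π ∈ Cpl, relEnt π ρ = relEnt πstar ρ → π = πstar))
    (hπstar₂ : πstar ∈ Cpl₂)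
    (Phat : Measure Ω)
    (hPhat : Phat = ℙ₀.withDensity
      (fun ω => ENNReal.ofReal ((πstar.rnDeriv ρ (X0 ω, X1 ω)).toReal)))
    -- the set P₂(μ₀,μ₁)
    (P₂ : Set (Measure Ω))
    (hP₂ : P₂ = {P : Measure Ω | IsProbabilityMeasure P ∧ (P ≪ ℙ₀ ∧ ℙ₀ ≪ P)
      ∧ P.map X0 = μ₀ ∧ P.map X1 = μ₁
      ∧ Integrable (fun ω => Real.log ((P.rnDeriv ℙ₀ ω).toReal)) ℙ₀
      ∧ Integrable (fun ω => ((P.rnDeriv ℙ₀ ω).toReal) ^ 2) ℙ₀}) :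
    Phat ∈ P₂ ∧
    (∀ P ∈ P₂, relEnt Phat ℙ₀ ≤ relEnt P ℙ₀) ∧
    (∀ P ∈ P₂, relEnt P ℙ₀ = relEnt Phat ℙ₀ → P = Phat) := by
  set T : Ω → _ := fun ω => (X0 ω, X1 ω)
  have hT : Measurable T := hX0.prodMk hX1
  subst hρ hCpl₂
  obtain ⟨-, ⟨hπρ, hρπ⟩, hπ_int⟩ := hπstar₂
  obtain ⟨hπ_mem, hmin, huniq⟩ := hπstar
  obtain ⟨_, hπ₀, hπ₁⟩ := hCpl ▸ hπ_mem
  have hPhat_eq : Phat = reweightAlong ℙ₀ T πstar :=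
    hPhat.trans (reweightAlong_eq_withDensity_ofReal hT).symm
  have : IsProbabilityMeasure (ℙ₀.map T) := Measure.isProbabilityMeasure_map hT.aemeasurable
  have : IsProbabilityMeasure Phat := hPhat_eq ▸ isProbabilityMeasure_reweightAlong hT hπρ
  have hstatic : ∀ P ∈ P₂, klDiv πstar (ℙ₀.map T) ≤ klDiv (P.map T) (ℙ₀.map T)
      ∧ (klDiv (P.map T) (ℙ₀.map T) = klDiv πstar (ℙ₀.map T) → P.map T = πstar) := by
    intro P hP
    obtain ⟨_, -, hP₀, hP₁, -⟩ := hP₂ ▸ hP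
    have := Measure.isProbabilityMeasure_map (μ := P) hT.aemeasurable
    have hmem : P.map T ∈ Cpl := hCpl ▸
      ⟨this, (Measure.fst_map_prodMk hX1).trans hP₀, (Measure.snd_map_prodMk hX0).trans hP₁⟩
    rw [← relEnt_eq_klDiv, ← relEnt_eq_klDiv]
    exact ⟨hmin _ hmem, huniq _ hmem⟩
  have hPhat_mem : Phat ∈ P₂ := by
    have hF : Measurable fun ω => (πstar.rnDeriv (ℙ₀.map T) (T ω)).toReal := by fun_prop
    obtain ⟨hlog, hsq⟩ := (integrable_add_iff_of_nonneg hF.log.abs.aestronglyMeasurable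
      (ae_of_all _ fun _ => abs_nonneg _) (ae_of_all _ fun _ => sq_nonneg _)).mp hπ_int
    rw [hP₂, hPhat_eq]
    exact ⟨hPhat_eq ▸ this, ⟨withDensity_absolutelyContinuous _ _,
      absolutelyContinuous_reweightAlong hT hρπ⟩,
      (map_comp_reweightAlong hT hπρ measurable_fst).trans hπ₀,
      (map_comp_reweightAlong hT hπρ measurable_snd).trans hπ₁,
      integrable_comp_toReal_rnDeriv_reweightAlong hT
        ((integrable_norm_iff hF.log.aestronglyMeasurable).mp hlog),
      integrable_comp_toReal_rnDeriv_reweightAlong (f := fun x => x ^ 2) hT hsq⟩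
  refine ⟨hPhat_mem, fun P hP => ?_, fun P hP hent => ?_⟩
  · obtain ⟨_, -⟩ := hP₂ ▸ hP
    rw [relEnt_eq_klDiv, relEnt_eq_klDiv, hPhat_eq]
    exact klDiv_reweightAlong_le hT hπρ (hstatic P hP).1
  · obtain ⟨_, ⟨hPℙ₀, -⟩, -, -, -, hP_sq⟩ := hP₂ ▸ hP
    rw [relEnt_eq_klDiv, relEnt_eq_klDiv, hPhat_eq] at hent
    rw [hPhat_eq]
    exact eq_reweightAlong_of_klDiv_eq hT hπρ (hstatic P hP).1 (hstatic P hP).2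
      (klDiv_ne_top_of_integrable_rnDeriv_sq hPℙ₀ hP_sq) hent

/-- if the static Schrödinger bridge problem
`min_{π ∈ Π(μ₀,μ₁)} H(π|ρ)`, `ρ = ℙ₀∘(X₀,X₁)⁻¹`, has a unique solution `π*`
lying in `Cpl₂(μ₀,μ₁)`, then `P̂` defined by `dP̂/dℙ₀ = (dπ*/dρ)(X₀,X₁)` is the
unique minimizer of `H(·|ℙ₀)` over `P₂(μ₀,μ₁)`. -/
theorem stmt_10 {d : ℕ} {Ω : Type*} {m0 : MeasurableSpace Ω}
    (ℙ₀ : Measure Ω) [IsProbabilityMeasure ℙ₀]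
    (μ₀ μ₁ : Measure (EuclideanSpace ℝ (Fin d)))
    [IsProbabilityMeasure μ₀] [IsProbabilityMeasure μ₁]
    (X0 X1 : Ω → EuclideanSpace ℝ (Fin d))
    (hX0 : Measurable X0) (hX1 : Measurable X1)
    (hμ₀ : ℙ₀.map X0 = μ₀)
    (ρ : Measure (EuclideanSpace ℝ (Fin d) × EuclideanSpace ℝ (Fin d)))
    (hρ : ρ = ℙ₀.map (fun ω => (X0 ω, X1 ω)))
    -- the set of couplings Π(μ₀,μ₁) and its subset Cpl₂(μ₀,μ₁)
    (Cpl Cpl₂ : Set (Measure (EuclideanSpace ℝ (Fin d) × EuclideanSpace ℝ (Fin d))))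
    (hCpl : Cpl = {π | IsProbabilityMeasure π ∧ π.map Prod.fst = μ₀
      ∧ π.map Prod.snd = μ₁})
    (hCpl₂ : Cpl₂ = {π ∈ Cpl | (π ≪ ρ ∧ ρ ≪ π)
      ∧ Integrable (fun ω => |Real.log ((π.rnDeriv ρ (X0 ω, X1 ω)).toReal)|
          + ((π.rnDeriv ρ (X0 ω, X1 ω)).toReal) ^ 2) ℙ₀})
    -- π* is the unique solution of the Schrödinger bridge problem and lies in Cpl₂
    (πstar : Measure (EuclideanSpace ℝ (Fin d) × EuclideanSpace ℝ (Fin d)))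
    (hπstar : πstar ∈ Cpl ∧ (∀ π ∈ Cpl, relEnt πstar ρ ≤ relEnt π ρ)
      ∧ (∀ π ∈ Cpl, relEnt π ρ = relEnt πstar ρ → π = πstar))
    (hπstar₂ : πstar ∈ Cpl₂)
    (Phat : Measure Ω)
    (hPhat : Phat = ℙ₀.withDensity
      (fun ω => ENNReal.ofReal ((πstar.rnDeriv ρ (X0 ω, X1 ω)).toReal)))
    -- the set P₂(μ₀,μ₁)
    (P₂ : Set (Measure Ω))
    (hP₂ : P₂ = {P : Measure Ω | IsProbabilityMeasure P ∧ (P ≪ ℙ₀ ∧ ℙ₀ ≪ P)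
      ∧ P.map X0 = μ₀ ∧ P.map X1 = μ₁
      ∧ Integrable (fun ω => Real.log ((P.rnDeriv ℙ₀ ω).toReal)) ℙ₀
      ∧ Integrable (fun ω => ((P.rnDeriv ℙ₀ ω).toReal) ^ 2) ℙ₀}) :
    Phat ∈ P₂ ∧
    (∀ P ∈ P₂, relEnt Phat ℙ₀ ≤ relEnt P ℙ₀) ∧
    (∀ P ∈ P₂, relEnt P ℙ₀ = relEnt Phat ℙ₀ → P = Phat) :=
  stmt_10_general (m0 := m0) ℙ₀ μ₀ μ₁ X0 X1 hX0 hX1 ρ hρ Cpl Cpl₂ hCpl hCpl₂ πstar hπstar hπstar₂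
    Phat hPhat P₂ hP₂
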